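/- arXiv:2404.00759 — 4 statements merged into one kernel-verified Lean document; each statement's English description precedes it below -/
import Mathlib

section
/- Let J, J_1, i_0, i_1 and w_j be as in the block decomposition (J = J_1 ∪ {σ_{i_0}}, i_0 minimal, i_1 the maximal integer with σ_i ∈ J for i_0 ≤ i < i_1, w_j = (i_1−j+1,...,i_0+1,i_0)). Let v_J and v_{J_1} denote the longest elements of the parabolic subgroups S_J and S_{J_1}. Then v_J = w_1 · v_{J_1}, where w_1 = (i_1, i_1−1, ..., i_0+1, i_0). -/
open Equiv

/-- The simple transposition σ_i = (i, i+1) in S_n (0-indexed). -/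
def simpleT (n i : ℕ) (h : i + 1 < n) : Perm (Fin n) :=
  Equiv.swap ⟨i, Nat.lt_of_succ_lt h⟩ ⟨i + 1, h⟩

/-- Coxeter length = number of inversions. -/
def len {n : ℕ} (w : Perm (Fin n)) : ℕ :=
  (Finset.univ.filter fun p : Fin n × Fin n => p.1 < p.2 ∧ w p.2 < w p.1).card

/-- Parabolic subgroup generated by the simple reflections with indices in J. -/
def SJ (n : ℕ) (J : Set ℕ) : Subgroup (Perm (Fin n)) :=
  Subgroup.closure {s | ∃ i, ∃ h : i + 1 < n, i ∈ J ∧ s = simpleT n i h}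

/-- Minimal length left coset representatives: ℓ(ws) > ℓ(w) for all s ∈ J. -/
def DJ (n : ℕ) (J : Set ℕ) : Set (Perm (Fin n)) :=
  {w | ∀ i, ∀ h : i + 1 < n, i ∈ J → len w < len (w * simpleT n i h)}

/-- Minimal double coset representatives: ℓ(s₁v) > ℓ(v), ℓ(vs₂) > ℓ(v). -/
def D2 (n : ℕ) (J1 J2 : Set ℕ) : Set (Perm (Fin n)) :=
  {v | (∀ i, ∀ h : i + 1 < n, i ∈ J1 → len v < len (simpleT n i h * v)) ∧
       (∀ i, ∀ h : i + 1 < n, i ∈ J2 → len v < len (v * simpleT n i h))}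

/-- Bruhat order: reflexive transitive closure of multiplying by a transposition
while increasing the length. -/
def BruhatLE {n : ℕ} (x y : Perm (Fin n)) : Prop :=
  Relation.ReflTransGen
    (fun u v => (∃ a b : Fin n, a ≠ b ∧ v = Equiv.swap a b * u) ∧ len u < len v) x y

def BruhatLT {n : ℕ} (x y : Perm (Fin n)) : Prop := BruhatLE x y ∧ x ≠ y

/-- w is the cycle (i₁−j+1, …, i₀+1, i₀): sends i to i−1 for i₀ < i ≤ i₁−j+1,
sends i₀ to i₁−j+1, and fixes all other points. -/
def IsCycleW (n i0 i1 j : ℕ) (w : Perm (Fin n)) : Prop :=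
  ∀ i : Fin n,
    ((i0 < (i : ℕ) ∧ (i : ℕ) ≤ i1 - j + 1) → (w i : ℕ) = (i : ℕ) - 1) ∧
    ((i : ℕ) = i0 → (w i : ℕ) = i1 - j + 1) ∧
    (((i : ℕ) < i0 ∨ i1 - j + 1 < (i : ℕ)) → w i = i)

/-! The longest element of `S_J` is pinned down combinatorially. Call the maximal runs of
consecutive integers linked by `J` its blocks. Every element of `S_J` maps each block onto itself,
and the longest one is decreasing on each block, since an ascent at some `i ∈ J` would make
`v σ_i` longer. A permutation with these two properties is unique: a strictly antitone self-map
of a finite chain is its reversal.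

Passing from `J` to `J₁ = J \ {i₀}` splits the block `[i₀, i₁]` into `{i₀}` and `[i₀ + 1, i₁]`
and leaves every other block alone. So `v_{J₁}` fixes `i₀` and reverses `[i₀ + 1, i₁]`, and `w₁`
shifts `[i₀ + 1, i₁]` down by one and sends `i₀` to `i₁`. Hence `w₁ v_{J₁}` reverses `[i₀, i₁]`
and agrees with `v_{J₁}` on every other block. -/

theorem Finset.eqOn_of_mapsTo_of_strictAntiOn {α : Type*} [LinearOrder α] {s : Finset α}
    {f g : α → α} (hf : Set.MapsTo f s s) (hg : Set.MapsTo g s s)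
    (hf' : StrictAntiOn f s) (hg' : StrictAntiOn g s) : Set.EqOn f g s := by
  set e := s.orderEmbOfFin rfl
  have key : ∀ {f : α → α}, Set.MapsTo f s s → StrictAntiOn f s → ∀ i, f (e i.rev) = e i :=
    fun hf hf' => congrFun (s.orderEmbOfFin_unique rfl (fun i => hf (s.orderEmbOfFin_mem rfl _))
      fun i j hij => hf' (s.orderEmbOfFin_mem rfl _) (s.orderEmbOfFin_mem rfl _)
        (e.strictMono (Fin.rev_lt_rev.2 hij)))
  intro c hc
  obtain ⟨i, rfl⟩ : c ∈ Set.range e := by simpa [e] using hc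
  rw [← Fin.rev_rev i, key hf hf', key hg hg']

lemma simpleT_val (n i : ℕ) (h : i + 1 < n) (p : Fin n) :
    (simpleT n i h p : ℕ) = if (p : ℕ) = i then i + 1 else if (p : ℕ) = i + 1 then i else p := by
  simp only [simpleT, swap_apply_def, Fin.ext_iff]
  split_ifs <;> simp_all

lemma simpleT_lt_simpleT {n i : ℕ} (h : i + 1 < n) {p q : Fin n} (hpq : p < q)
    (hne : ¬((p : ℕ) = i ∧ (q : ℕ) = i + 1)) : simpleT n i h p < simpleT n i h q := by
  rw [Fin.lt_def] at hpq ⊢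
  rw [simpleT_val, simpleT_val]
  split_ifs <;> omega

theorem len_lt_len_mul_simpleT {n : ℕ} (x : Perm (Fin n)) (i : ℕ) (h : i + 1 < n)
    (hasc : x ⟨i, Nat.lt_of_succ_lt h⟩ < x ⟨i + 1, h⟩) :
    len x < len (x * simpleT n i h) := by
  set s := simpleT n i h
  have hs : ∀ p, s (s p) = p := fun p => swap_apply_self _ _ p
  let φ : Fin n × Fin n ↪ Fin n × Fin n := ⟨Prod.map s s, s.injective.prodMap s.injective⟩
  -- conjugation by `s` sends inversions of `x` to inversions of `x * s`, missing only `(i, i + 1)`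
  have hmap : (Finset.univ.filter fun p : Fin n × Fin n => p.1 < p.2 ∧ x p.2 < x p.1).map φ ⊆
      Finset.univ.filter fun p : Fin n × Fin n => p.1 < p.2 ∧ (x * s) p.2 < (x * s) p.1 := by
    intro q hq
    obtain ⟨p, hp, rfl⟩ := Finset.mem_map.1 hq
    simp only [Finset.mem_filter, Finset.mem_univ, true_and] at hp ⊢
    refine ⟨simpleT_lt_simpleT h hp.1 ?_, by simpa [φ, hs] using hp.2⟩
    rintro ⟨h1, h2⟩
    have hp1 : p.1 = ⟨i, Nat.lt_of_succ_lt h⟩ := Fin.ext h1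
    have hp2 : p.2 = ⟨i + 1, h⟩ := Fin.ext h2
    exact hasc.not_gt (hp1 ▸ hp2 ▸ hp.2)
  refine lt_of_eq_of_lt (Finset.card_map φ).symm (Finset.card_lt_card ?_)
  refine (Finset.ssubset_iff_of_subset hmap).2 ⟨(⟨i, Nat.lt_of_succ_lt h⟩, ⟨i + 1, h⟩), ?_, ?_⟩
  · simp [s, simpleT, hasc]
  · simp only [Finset.mem_map, Finset.mem_filter, Finset.mem_univ, true_and, not_exists, not_and]
    rintro p hp hφp
    have h1 := congrArg (fun q => (q.1 : ℕ)) hφp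
    have h2 := congrArg (fun q => (q.2 : ℕ)) hφp
    have hp1 := Fin.lt_def.1 hp.1
    simp only [φ, Function.Embedding.coeFn_mk, Prod.map_fst, Prod.map_snd, s, simpleT_val] at h1 h2
    split_ifs at h1 h2 <;> omega

def SameBlock (J : Set ℕ) (a b : ℕ) : Prop := Set.Ico (min a b) (max a b) ⊆ J

namespace SameBlock

variable {J : Set ℕ} {a b c : ℕ}

lemma refl (J : Set ℕ) (a : ℕ) : SameBlock J a a := by
  simp [SameBlock]

lemma symm (h : SameBlock J a b) : SameBlock J b a := by
  rwa [SameBlock, min_comm, max_comm]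

lemma trans (hab : SameBlock J a b) (hbc : SameBlock J b c) : SameBlock J a c := by
  intro k hk
  simp only [Set.mem_Ico] at hk
  by_cases hk' : min a b ≤ k ∧ k < max a b
  · exact hab hk'
  · exact hbc ⟨by omega, by omega⟩

lemma mono {K : Set ℕ} (h : SameBlock J a b) (hJK : J ⊆ K) : SameBlock K a b :=
  Set.Subset.trans h hJK

lemma Ico_subset (h : SameBlock J a b) (hab : a ≤ b) : Set.Ico a b ⊆ J := by
  rwa [SameBlock, min_eq_left hab, max_eq_right hab] at h

lemma mem_Ioc {l u : ℕ} (h : SameBlock J a b) (hb : b ∈ Set.Ioc l u) (hl : l ∉ J)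
    (hu : u ∉ J) : a ∈ Set.Ioc l u := by
  obtain ⟨hlb, hbu⟩ := hb
  constructor
  · by_contra! hal
    exact hl (h ⟨by omega, by omega⟩)
  · by_contra! hua
    exact hu (h ⟨by omega, by omega⟩)

lemma eq_of_diff_min {i0 : ℕ} (hmin : ∀ i ∈ J, i0 ≤ i) (h : SameBlock (J \ {i0}) a i0) :
    a = i0 := by
  by_contra hne
  rcases Nat.lt_or_gt_of_ne hne with hlt | hgt
  · exact absurd (hmin a (h ⟨by omega, by omega⟩).1) (by omega)
  · exact (h ⟨by omega, by omega⟩).2 rfl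

end SameBlock

lemma sameBlock_apply_of_mem_SJ {n : ℕ} {J : Set ℕ} {x : Perm (Fin n)} (hx : x ∈ SJ n J)
    (c : Fin n) : SameBlock J (x c) c := by
  induction hx using Subgroup.closure_induction generalizing c with
  | mem _ hs =>
    obtain ⟨i, h, hi, rfl⟩ := hs
    rw [simpleT_val]
    split_ifs <;> intro k hk <;> simp only [Set.mem_Ico] at hk
    all_goals first | exact absurd hk (by omega) | (obtain rfl : k = i := by omega); exact hi
  | one => exact .refl J c
  | mul x y _ _ hx hy => exact (hx (y c)).trans (hy c)
  | inv x _ hx => simpa using (hx (x⁻¹ c)).symm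

lemma apply_lt_apply_of_descents {n : ℕ} {J : Set ℕ} {x : Perm (Fin n)}
    (hdesc : ∀ i (h : i + 1 < n), i ∈ J → x ⟨i + 1, h⟩ < x ⟨i, Nat.lt_of_succ_lt h⟩)
    {a b : Fin n} (hab : a < b) (hJ : Set.Ico (a : ℕ) b ⊆ J) : x b < x a := by
  obtain ⟨b, hb⟩ := b
  replace hab : (a : ℕ) + 1 ≤ b := hab
  revert hb hJ
  induction b, hab using Nat.le_induction with
  | base => exact fun hb hJ => hdesc a hb (hJ ⟨le_rfl, lt_add_one _⟩)
  | succ m hm ih =>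
    intro hb hJ
    refine (hdesc m hb (hJ ⟨by omega, lt_add_one m⟩)).trans (ih (Nat.lt_of_succ_lt hb) ?_)
    exact (Set.Ico_subset_Ico_right m.le_succ).trans hJ

def IsBlockReversal {n : ℕ} (J : Set ℕ) (x : Perm (Fin n)) : Prop :=
  (∀ c : Fin n, SameBlock J (x c) c) ∧
    ∀ a b : Fin n, a < b → Set.Ico (a : ℕ) b ⊆ J → x b < x a

theorem isBlockReversal_of_forall_len_le {n : ℕ} {J : Set ℕ} {v : Perm (Fin n)}
    (hv : v ∈ SJ n J) (hmax : ∀ x ∈ SJ n J, len x ≤ len v) : IsBlockReversal J v := by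
  refine ⟨sameBlock_apply_of_mem_SJ hv, fun a b hab hJ => apply_lt_apply_of_descents ?_ hab hJ⟩
  intro i h hi
  refine lt_of_le_of_ne (not_lt.1 fun hasc => ?_) (v.injective.ne (by simp [Fin.ext_iff]))
  have hmem : v * simpleT n i h ∈ SJ n J := mul_mem hv (Subgroup.subset_closure ⟨i, h, hi, rfl⟩)
  exact (hmax _ hmem).not_gt (len_lt_len_mul_simpleT v i h hasc)

theorem IsBlockReversal.eq {n : ℕ} {J : Set ℕ} {x y : Perm (Fin n)} (hx : IsBlockReversal J x)
    (hy : IsBlockReversal J y) : x = y := by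
  classical
  ext a
  set C := Finset.univ.filter fun c : Fin n => SameBlock J c a
  have hmaps : ∀ {z : Perm (Fin n)}, IsBlockReversal J z → Set.MapsTo z C C := by
    intro z hz c hc
    simp only [C, Finset.coe_filter, Finset.mem_univ, true_and, Set.mem_ofPred_eq] at hc ⊢
    exact (hz.1 c).trans hc
  have hanti : ∀ {z : Perm (Fin n)}, IsBlockReversal J z → StrictAntiOn z C := by
    intro z hz c hc d hd hcd
    simp only [C, Finset.coe_filter, Finset.mem_univ, true_and, Set.mem_ofPred_eq] at hc hd
    exact hz.2 c d hcd ((hc.trans hd.symm).Ico_subset hcd.le)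
  exact congrArg _ (Finset.eqOn_of_mapsTo_of_strictAntiOn (hmaps hx) (hmaps hy) (hanti hx)
    (hanti hy) (by simpa [C] using SameBlock.refl J a))

namespace IsCycleW

variable {n i0 i1 : ℕ} {w : Perm (Fin n)}

lemma val_apply (hw : IsCycleW n i0 i1 1 w) (hlt : i0 < i1) (c : Fin n) :
    (w c : ℕ) = if (c : ℕ) = i0 then i1 else if i0 < c ∧ (c : ℕ) ≤ i1 then c - 1 else c := by
  obtain ⟨hmid, hbot, hout⟩ := hw c
  split_ifs with h0 h1
  · rw [hbot h0]; omega
  · exact hmid ⟨h1.1, by omega⟩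
  · rw [hout (by omega)]

lemma apply_lt_apply (hw : IsCycleW n i0 i1 1 w) (hlt : i0 < i1) {c d : Fin n} (hcd : c < d)
    (hc : (c : ℕ) ≠ i0) (hd : (d : ℕ) ≠ i0) : w c < w d := by
  rw [Fin.lt_def] at hcd ⊢
  rw [hw.val_apply hlt, hw.val_apply hlt]
  split_ifs <;> omega

lemma sameBlock_apply (hw : IsCycleW n i0 i1 1 w) (hlt : i0 < i1) {J : Set ℕ}
    (hblock : ∀ i, i0 ≤ i → i < i1 → i ∈ J) (c : Fin n) : SameBlock J (w c) c := by
  intro k hk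
  rw [Set.mem_Ico, hw.val_apply hlt] at hk
  apply hblock <;> split_ifs at hk <;> omega

end IsCycleW

theorem IsBlockReversal.cycle_mul {n i0 i1 : ℕ} {J : Set ℕ} {w v : Perm (Fin n)}
    (hmin : ∀ i ∈ J, i0 ≤ i) (hblock : ∀ i, i0 ≤ i → i < i1 → i ∈ J) (hmax : i1 ∉ J)
    (hlt : i0 < i1) (hw : IsCycleW n i0 i1 1 w) (hv : IsBlockReversal (J \ {i0}) v) :
    IsBlockReversal J (w * v) := by
  refine ⟨fun c => (hw.sameBlock_apply hlt hblock (v c)).trans ((hv.1 c).mono Set.sdiff_subset),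
    fun a b hab hJ => ?_⟩
  have hab' : (a : ℕ) < b := hab
  simp only [Perm.mul_apply]
  by_cases hcross : (a : ℕ) ≤ i0 ∧ i0 < b
  · have ha : (a : ℕ) = i0 := le_antisymm hcross.1 (hmin a (hJ ⟨le_rfl, hab'⟩))
    have hb : (b : ℕ) ≤ i1 := by
      by_contra! hb
      exact hmax (hJ ⟨by omega, hb⟩)
    have hva : (v a : ℕ) = i0 := SameBlock.eq_of_diff_min hmin (ha ▸ hv.1 a)
    obtain ⟨hvb0, hvb1⟩ := (hv.1 b).mem_Ioc ⟨hcross.2, hb⟩ (fun h => h.2 rfl) (fun h => hmax h.1)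
    rw [Fin.lt_def, hw.val_apply hlt, hw.val_apply hlt, if_pos hva]
    split_ifs <;> omega
  · have hJ1 : Set.Ico (a : ℕ) b ⊆ J \ {i0} := fun k hk =>
      ⟨hJ hk, fun hk0 => hcross ⟨hk0 ▸ hk.1, hk0 ▸ hk.2⟩⟩
    have ha : (a : ℕ) ≠ i0 := fun ha => hcross ⟨ha.le, ha ▸ hab'⟩
    have hb : (b : ℕ) ≠ i0 := fun hb => by
      have := hmin a (hJ ⟨le_rfl, hab'⟩)
      omega
    refine hw.apply_lt_apply hlt (hv.2 a b hab hJ1) ?_ ?_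
    · exact fun h => hb (SameBlock.eq_of_diff_min hmin (h ▸ (hv.1 b).symm))
    · exact fun h => ha (SameBlock.eq_of_diff_min hmin (h ▸ (hv.1 a).symm))

theorem stmt5_general (n : ℕ) (J : Set ℕ)
    (i0 i1 : ℕ) (hmin : ∀ i ∈ J, i0 ≤ i)
    (hblock : ∀ i, i0 ≤ i → i < i1 → i ∈ J) (hmax : i1 ∉ J) (hlt : i0 < i1)
    (w1 : Perm (Fin n)) (hw1 : IsCycleW n i0 i1 1 w1)
    (vJ vJ1 : Perm (Fin n))
    (hvJ : vJ ∈ SJ n J) (hvJmax : ∀ x ∈ SJ n J, len x ≤ len vJ)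
    (hvJ1 : vJ1 ∈ SJ n (J \ {i0}))
    (hvJ1max : ∀ x ∈ SJ n (J \ {i0}), len x ≤ len vJ1) :
    vJ = w1 * vJ1 :=
  (isBlockReversal_of_forall_len_le hvJ hvJmax).eq <|
    (isBlockReversal_of_forall_len_le hvJ1 hvJ1max).cycle_mul hmin hblock hmax hlt hw1

theorem stmt5 (n : ℕ) (J : Set ℕ) (hvalid : ∀ i ∈ J, i + 1 < n)
    (i0 i1 : ℕ) (hi0 : i0 ∈ J) (hmin : ∀ i ∈ J, i0 ≤ i)
    (hblock : ∀ i, i0 ≤ i → i < i1 → i ∈ J) (hmax : i1 ∉ J) (hlt : i0 < i1)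
    (w1 : Perm (Fin n)) (hw1 : IsCycleW n i0 i1 1 w1)
    (vJ vJ1 : Perm (Fin n))
    (hvJ : vJ ∈ SJ n J) (hvJmax : ∀ x ∈ SJ n J, len x ≤ len vJ)
    (hvJ1 : vJ1 ∈ SJ n (J \ {i0}))
    (hvJ1max : ∀ x ∈ SJ n (J \ {i0}), len x ≤ len vJ1) :
    vJ = w1 * vJ1 :=
  stmt5_general n J i0 i1 hmin hblock hmax hlt w1 hw1 vJ vJ1 hvJ hvJmax hvJ1 hvJ1max
end

section
/- Let J, J_1 = J \ {σ_{i_0}}, i_0, i_1 be as in the block decomposition, and let w_1 be the cycle (i_1, i_1−1, ..., i_0+1, i_0). If w ∈ S_n^J (i.e. ℓ(ws) > ℓ(w) for all s ∈ J), then w·w_1 ∈ S_n^{J_1}. -/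
/-!
Right multiplication by a simple reflection σ_i changes the inversion count by exactly one,
so `len (w * σ_i) > len w` iff `w i < w (i + 1)`. Precomposing with `w₁` shifts the positions
`i₀ < i ≤ i₁` down by one and fixes those beyond `i₁`, so for `i ∈ J \ {i₀}` the ascent of
`w * w₁` at `i` is the ascent of `w` at `i - 1 ∈ J` when `i < i₁`, and at `i` itself when `i > i₁`.
-/

open Equiv

theorem Fin.swap_lt_swap_iff_of_succ_eq {n : ℕ} {a b : Fin n} (hab : (a : ℕ) + 1 = b)
    {x y : Fin n} (h₁ : ¬(x = a ∧ y = b)) (h₂ : ¬(x = b ∧ y = a)) :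
    swap a b x < swap a b y ↔ x < y := by
  rw [swap_apply_def, swap_apply_def]
  simp only [Fin.ext_iff, not_and] at h₁ h₂
  split_ifs <;> simp only [Fin.lt_def, Fin.ext_iff] at * <;> omega

theorem len_mul_eq_card {n : ℕ} (w σ : Perm (Fin n)) :
    len (w * σ) = (Finset.univ.filter fun q : Fin n × Fin n =>
      σ⁻¹ q.1 < σ⁻¹ q.2 ∧ w q.2 < w q.1).card :=
  Finset.card_equiv (σ.prodCongr σ) fun p => by simp only [Finset.mem_filter]; simp

theorem len_mul_swap_of_lt {n : ℕ} {a b : Fin n} (hab : (a : ℕ) + 1 = b) {w : Perm (Fin n)}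
    (hw : w a < w b) : len (w * swap a b) = len w + 1 := by
  have hlt : a < b := by rw [Fin.lt_def]; omega
  have hinv : (b, a) ∉ Finset.univ.filter fun q : Fin n × Fin n => q.1 < q.2 ∧ w q.2 < w q.1 := by
    simp [hlt.not_gt]
  rw [len_mul_eq_card, swap_inv, len, ← Finset.card_insert_of_notMem hinv]
  congr 1
  ext ⟨x, y⟩
  simp only [Finset.mem_filter, Finset.mem_univ, true_and, Finset.mem_insert, Prod.mk.injEq]
  by_cases hxy : x = a ∧ y = b
  · obtain ⟨rfl, rfl⟩ := hxy
    simp [hlt.ne', hlt.not_gt, hw.not_gt]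
  by_cases hyx : x = b ∧ y = a
  · obtain ⟨rfl, rfl⟩ := hyx
    simp [hlt, hw]
  rw [Fin.swap_lt_swap_iff_of_succ_eq hab hxy hyx]
  tauto

theorem len_mul_swap_of_gt {n : ℕ} {a b : Fin n} (hab : (a : ℕ) + 1 = b) {w : Perm (Fin n)}
    (hw : w b < w a) : len w = len (w * swap a b) + 1 := by
  have := len_mul_swap_of_lt hab (w := w * swap a b) (by simpa using hw)
  rwa [mul_assoc, swap_mul_self, mul_one] at this

theorem len_lt_len_mul_simpleT_iff {n i : ℕ} (h : i + 1 < n) (w : Perm (Fin n)) :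
    len w < len (w * simpleT n i h) ↔ w ⟨i, Nat.lt_of_succ_lt h⟩ < w ⟨i + 1, h⟩ := by
  have hab : ((⟨i, Nat.lt_of_succ_lt h⟩ : Fin n) : ℕ) + 1 = (⟨i + 1, h⟩ : Fin n) := rfl
  have hne : w ⟨i, Nat.lt_of_succ_lt h⟩ ≠ w ⟨i + 1, h⟩ := w.injective.ne (by simp)
  rcases hne.lt_or_gt with hw | hw
  · simp only [simpleT, len_mul_swap_of_lt hab hw, hw, Nat.lt_succ_self]
  · simp only [simpleT, hw.not_gt, iff_false, len_mul_swap_of_gt hab hw]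
    omega

theorem mem_DJ_iff {n : ℕ} {J : Set ℕ} {w : Perm (Fin n)} :
    w ∈ DJ n J ↔ ∀ i, ∀ h : i + 1 < n, i ∈ J → w ⟨i, Nat.lt_of_succ_lt h⟩ < w ⟨i + 1, h⟩ := by
  simp only [DJ, Set.mem_ofPred_eq, len_lt_len_mul_simpleT_iff]

theorem IsCycleW.apply_succ {n i0 i1 j : ℕ} {w : Perm (Fin n)} (hw : IsCycleW n i0 i1 j w)
    {k : ℕ} (hk : k + 1 < n) (h0 : i0 ≤ k) (h1 : k + 1 ≤ i1 - j + 1) :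
    w ⟨k + 1, hk⟩ = ⟨k, Nat.lt_of_succ_lt hk⟩ :=
  Fin.ext <| (hw ⟨k + 1, hk⟩).1 ⟨Nat.lt_succ_of_le h0, h1⟩

theorem stmt7_general (n : ℕ) (J : Set ℕ)
    (i0 i1 : ℕ) (hmin : ∀ i ∈ J, i0 ≤ i)
    (hblock : ∀ i, i0 ≤ i → i < i1 → i ∈ J) (hmax : i1 ∉ J) (hlt : i0 < i1)
    (w1 : Perm (Fin n)) (hw1 : IsCycleW n i0 i1 1 w1)
    (w : Perm (Fin n)) (hwDJ : w ∈ DJ n J) :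
    w * w1 ∈ DJ n (J \ {i0}) := by
  rw [mem_DJ_iff] at hwDJ ⊢
  rintro i h ⟨hiJ, hii0 : i ≠ i0⟩
  have hi0i : i0 < i := (hmin i hiJ).lt_of_ne hii0.symm
  rcases (show i ≠ i1 by rintro rfl; exact hmax hiJ).lt_or_gt with hi | hi
  · obtain ⟨k, rfl⟩ := Nat.exists_eq_add_one_of_ne_zero (by omega : i ≠ 0)
    simp only [Perm.mul_apply, hw1.apply_succ h (by omega) (by omega),
      hw1.apply_succ (Nat.lt_of_succ_lt h) (by omega) (by omega)]
    exact hwDJ k _ (hblock k (by omega) (by omega))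
  · have hfix : ∀ k : Fin n, i1 < k → w1 k = k := fun k hk => (hw1 k).2.2 (Or.inr (by omega))
    simp only [Perm.mul_apply, hfix ⟨i, Nat.lt_of_succ_lt h⟩ hi, hfix ⟨i + 1, h⟩ (by simp; omega)]
    exact hwDJ i h hiJ

theorem stmt7 (n : ℕ) (J : Set ℕ) (hvalid : ∀ i ∈ J, i + 1 < n)
    (i0 i1 : ℕ) (hi0 : i0 ∈ J) (hmin : ∀ i ∈ J, i0 ≤ i)
    (hblock : ∀ i, i0 ≤ i → i < i1 → i ∈ J) (hmax : i1 ∉ J) (hlt : i0 < i1)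
    (w1 : Perm (Fin n)) (hw1 : IsCycleW n i0 i1 1 w1)
    (w : Perm (Fin n)) (hwDJ : w ∈ DJ n J) :
    w * w1 ∈ DJ n (J \ {i0}) :=
  stmt7_general n J i0 i1 hmin hblock hmax hlt w1 hw1 w hwDJ
end

section
/- Let x < y in the Bruhat order on S_n and let s be a simple reflection with sy < y and sx < x. Assume x is not comparable to sy in the Bruhat order. Then every z ∈ S_n with x < z < y satisfies sz < z. -/
/-!
If some `z` with `x < z < y` had `z < s z`, the lifting property (`z ≤ y`, `s y < y` and
`z < s z` imply `z ≤ s y`) would give `x ≤ z ≤ s y`, against the incomparability of `x` and `s y`.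

The lifting property is proved through Ehresmann's tableau criterion: `u ≤ v` in the Bruhat order
iff `#{a < r | j ≤ u a} ≤ #{a < r | j ≤ v a}` for all `r, j`. A Bruhat step `u → u * (p q)` with
`p < q`, `u p < u q` raises these counts by one exactly on the rectangle `(p, q] × (u p, u q]`.
Conversely, if `u ≠ v` satisfy the criterion, such a step staying below `v` is found at the first
position `i` where they differ, swapping it with the first later position whose value lies in
`(u i, v i]`; the sum of all counts strictly increases along the way.
-/

open Equiv

section

open Finset

variable {n : ℕ}

def inversions (w : Perm (Fin n)) : Finset (Fin n × Fin n) :=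
  {x | x.1 < x.2 ∧ w x.2 < w x.1}

lemma mem_inversions {w : Perm (Fin n)} {x : Fin n × Fin n} :
    x ∈ inversions w ↔ x.1 < x.2 ∧ w x.2 < w x.1 := by
  simp [inversions]

/-- With `τ = swap p q`, the map `x ↦ (τ x.1, τ x.2)`, replaced by the identity on the pairs
whose order `τ` reverses, injects the inversions of `u` into those of `u * τ` other than
`(p, q)`. -/
lemma len_lt_len_mul_swap {u : Perm (Fin n)} {p q : Fin n} (hpq : p < q) (hu : u p < u q) :
    len u < len (u * swap p q) := by
  set τ := swap p q
  let f : Fin n × Fin n → Fin n × Fin n := fun x => if τ x.1 < τ x.2 then (τ x.1, τ x.2) else x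
  have hle_left : ∀ c, c ≠ q → u c ≤ u (τ c) := by
    intro c hc
    rcases eq_or_ne c p with rfl | hcp
    · simpa [τ] using hu.le
    · rw [swap_apply_of_ne_of_ne hcp hc]
  have hle_right : ∀ d, d ≠ p → u (τ d) ≤ u d := by
    intro d hd
    rcases eq_or_ne d q with rfl | hdq
    · simpa [τ] using hu.le
    · rw [swap_apply_of_ne_of_ne hd hdq]
  have hmaps : Set.MapsTo f (inversions u) ((inversions (u * τ)).erase (p, q)) := by
    rintro ⟨c, d⟩ hcd
    obtain ⟨hcd, hucd⟩ : c < d ∧ u d < u c := mem_inversions.1 hcd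
    simp only [coe_erase, mem_coe, Set.mem_sdiff, Set.mem_singleton_iff, mem_inversions,
      Perm.mul_apply, f]
    split_ifs with hτ
    · refine ⟨⟨hτ, by simpa [τ] using hucd⟩, ?_⟩
      simp only [Prod.mk.injEq, τ, swap_apply_eq_iff, swap_apply_left, swap_apply_right]
      omega
    · have hc : c ≠ q := by
        rintro rfl
        exact hτ <| by
          simpa [τ, swap_apply_of_ne_of_ne (hpq.trans hcd).ne' hcd.ne'] using hpq.trans hcd
      have hd : d ≠ p := by
        rintro rfl
        exact hτ <| by
          simpa [τ, swap_apply_of_ne_of_ne hcd.ne (hcd.trans hpq).ne] using hcd.trans hpq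
      refine ⟨⟨hcd, (hle_right d hd).trans_lt (hucd.trans_le (hle_left c hc))⟩, ?_⟩
      rintro ⟨rfl, rfl⟩
      exact hucd.not_gt hu
  have hinj : Set.InjOn f (inversions u) := by
    rintro ⟨c, d⟩ hcd ⟨c', d'⟩ hcd' h
    rw [mem_coe, mem_inversions] at hcd hcd'
    simp only [f] at h
    split_ifs at h with h1 h2 h2
    · simp only [Prod.mk.injEq, EmbeddingLike.apply_eq_iff_eq] at h
      rw [h.1, h.2]
    · obtain ⟨rfl, rfl⟩ := Prod.mk.inj h
      simp only [τ, swap_apply_self] at h2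
      exact absurd hcd.1 h2
    · obtain ⟨rfl, rfl⟩ := Prod.mk.inj h.symm
      simp only [τ, swap_apply_self] at h1
      exact absurd hcd'.1 h1
    · exact h
  have hpq_mem : (p, q) ∈ inversions (u * τ) := by
    simp [mem_inversions, τ, hpq, hu]
  calc len u ≤ #((inversions (u * τ)).erase (p, q)) := card_le_card_of_injOn f hmaps hinj
    _ < len (u * τ) := card_erase_lt_of_mem hpq_mem

lemma len_mul_swap_lt_len {u : Perm (Fin n)} {p q : Fin n} (hpq : p < q) (hu : u q < u p) :
    len (u * swap p q) < len u := by
  simpa [mul_assoc] using len_lt_len_mul_swap (u := u * swap p q) hpq (by simpa using hu)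

lemma len_simpleT_mul_lt_iff {i : ℕ} (h : i + 1 < n) (w : Perm (Fin n)) :
    len (simpleT n i h * w) < len w ↔ w⁻¹ ⟨i + 1, h⟩ < w⁻¹ ⟨i, Nat.lt_of_succ_lt h⟩ := by
  set P := w⁻¹ ⟨i, Nat.lt_of_succ_lt h⟩
  set Q := w⁻¹ ⟨i + 1, h⟩
  have hs : simpleT n i h * w = w * swap P Q := swap_mul_eq_mul_swap _ _ _
  have hw : w P < w Q := by simp [P, Q, Fin.lt_def]
  rw [hs]
  constructor
  · intro hlt
    rcases lt_trichotomy P Q with hPQ | hPQ | hQP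
    · exact absurd hlt (len_lt_len_mul_swap hPQ hw).not_gt
    · exact absurd (hPQ ▸ hw) (lt_irrefl _)
    · exact hQP
  · intro hQP
    rw [swap_comm]
    exact len_mul_swap_lt_len hQP hw

/-- `BruhatLE` is by definition `Relation.ReflTransGen BruhatStep`. -/
def BruhatStep (u v : Perm (Fin n)) : Prop :=
  (∃ a b : Fin n, a ≠ b ∧ v = swap a b * u) ∧ len u < len v

lemma bruhatStep_mul_swap {u : Perm (Fin n)} {p q : Fin n} (hpq : p < q) (hu : u p < u q) :
    BruhatStep u (u * swap p q) :=
  ⟨⟨u p, u q, u.injective.ne hpq.ne, by simp [swap_mul_eq_mul_swap]⟩, len_lt_len_mul_swap hpq hu⟩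

lemma BruhatStep.exists_mul_swap {u v : Perm (Fin n)} (h : BruhatStep u v) :
    ∃ p q, p < q ∧ u p < u q ∧ v = u * swap p q := by
  obtain ⟨⟨a, b, hab, rfl⟩, hlen⟩ := h
  obtain ⟨p, q, hpq, hv⟩ : ∃ p q, p < q ∧ swap a b * u = u * swap p q := by
    rw [swap_mul_eq_mul_swap]
    rcases (u⁻¹.injective.ne hab).lt_or_gt with hlt | hgt
    · exact ⟨_, _, hlt, rfl⟩
    · exact ⟨_, _, hgt, by rw [swap_comm]⟩
  rw [hv] at hlen ⊢
  refine ⟨p, q, hpq, lt_of_not_ge fun hqp => ?_, rfl⟩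
  exact hlen.not_gt (len_mul_swap_lt_len hpq (hqp.lt_of_ne (u.injective.ne hpq.ne')))

lemma sum_add_eq_sum_add_of_eq_off_pair {α : Type*} [Fintype α] [DecidableEq α]
    {f g : α → ℕ} {p q : α} (hpq : p ≠ q) (h : ∀ a, a ≠ p → a ≠ q → f a = g a) :
    ∑ a, f a + (g p + g q) = ∑ a, g a + (f p + f q) := by
  have hsplit : ∀ k : α → ℕ, ∑ a, k a = k p + k q + ∑ a ∈ (univ.erase p).erase q, k a := by
    intro k
    rw [add_assoc, add_sum_erase _ _ (mem_erase.2 ⟨hpq.symm, mem_univ q⟩),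
      add_sum_erase _ _ (mem_univ p)]
  rw [hsplit f, hsplit g, sum_congr rfl fun a ha =>
    h a (ne_of_mem_erase (mem_of_mem_erase ha)) (ne_of_mem_erase ha)]
  ring

def rankCount (w : Perm (Fin n)) (r j : ℕ) : ℕ :=
  #{a : Fin n | (a : ℕ) < r ∧ j ≤ (w a : ℕ)}

def windowCount (w : Perm (Fin n)) (l r j : ℕ) : ℕ :=
  #{a : Fin n | l < (a : ℕ) ∧ (a : ℕ) < r ∧ j ≤ (w a : ℕ)}

lemma rankCount_mul_swap {u : Perm (Fin n)} {p q : Fin n} (hpq : p < q) (hu : u p < u q)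
    (r j : ℕ) :
    rankCount (u * swap p q) r j = rankCount u r j +
      if (p : ℕ) < r ∧ r ≤ q ∧ (u p : ℕ) < j ∧ j ≤ (u q : ℕ) then 1 else 0 := by
  have h := sum_add_eq_sum_add_of_eq_off_pair hpq.ne
    (f := fun a : Fin n => if (a : ℕ) < r ∧ j ≤ ((u * swap p q) a : ℕ) then 1 else 0)
    (g := fun a : Fin n => if (a : ℕ) < r ∧ j ≤ (u a : ℕ) then 1 else 0)
    (fun a hap haq => by simp [swap_apply_of_ne_of_ne hap haq])
  have hp : (u * swap p q) p = u q := by simp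
  have hq : (u * swap p q) q = u p := by simp
  simp only [hp, hq] at h
  simp only [rankCount, card_filter]
  split_ifs at h ⊢ <;> omega

lemma rankCount_eq_add_windowCount (w : Perm (Fin n)) (i : Fin n) {r : ℕ} (hir : (i : ℕ) < r)
    (j : ℕ) :
    rankCount w r j =
      rankCount w i j + (if j ≤ (w i : ℕ) then 1 else 0) + windowCount w i r j := by
  simp only [rankCount, windowCount, card_filter]
  rw [← Fintype.sum_ite_eq' i (fun a : Fin n => if j ≤ (w a : ℕ) then 1 else 0), ← sum_add_distrib,
    ← sum_add_distrib]
  refine sum_congr rfl fun a _ => ?_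
  split_ifs <;> omega

lemma rankCount_eq_rankCount_succ_add (w : Perm (Fin n)) {j : ℕ} (hj : j < n) (r : ℕ) :
    rankCount w r j = rankCount w r (j + 1) + if (w⁻¹ ⟨j, hj⟩ : ℕ) < r then 1 else 0 := by
  simp only [rankCount, card_filter]
  rw [← Fintype.sum_ite_eq' (w⁻¹ ⟨j, hj⟩) (fun a : Fin n => if (a : ℕ) < r then 1 else 0),
    ← sum_add_distrib]
  refine sum_congr rfl fun a _ => ?_
  have : a = w⁻¹ ⟨j, hj⟩ ↔ (w a : ℕ) = j := by
    rw [Perm.eq_inv_iff_eq, Fin.ext_iff]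
  split_ifs <;> omega

lemma rankCount_congr {u v : Perm (Fin n)} {r : ℕ} (h : ∀ a : Fin n, (a : ℕ) < r → u a = v a)
    (j : ℕ) : rankCount u r j = rankCount v r j := by
  simp only [rankCount]
  congr 1
  exact filter_congr fun a _ => and_congr_right fun ha => by rw [h a ha]

lemma windowCount_anti (w : Perm (Fin n)) (l r : ℕ) {j j' : ℕ} (hj : j ≤ j') :
    windowCount w l r j' ≤ windowCount w l r j :=
  card_le_card (monotone_filter_right _ fun _ _ h => ⟨h.1, h.2.1, hj.trans h.2.2⟩)

def RankLE (u v : Perm (Fin n)) : Prop :=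
  ∀ r j, rankCount u r j ≤ rankCount v r j

lemma BruhatLE.rankLE {u v : Perm (Fin n)} (h : BruhatLE u v) : RankLE u v := by
  induction h with
  | refl => exact fun r j => le_rfl
  | tail _ hstep ih =>
    obtain ⟨p, q, hpq, hu, rfl⟩ := BruhatStep.exists_mul_swap hstep
    intro r j
    rw [rankCount_mul_swap hpq hu]
    exact (ih r j).trans (Nat.le_add_right _ _)

lemma RankLE.rankCount_lt {u v : Perm (Fin n)} (h : RankLE u v) {i k : Fin n}
    (hagree : ∀ a : Fin n, a < i → u a = v a) (hik : u i < u k) (hkv : u k ≤ v i)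
    (hmin : ∀ c : Fin n, i < c → c < k → u i < u c → v i < u c)
    {r j : ℕ} (hir : (i : ℕ) < r) (hrk : r ≤ k) (hij : (u i : ℕ) < j) (hjk : j ≤ (u k : ℕ)) :
    rankCount u r j < rankCount v r j := by
  set J := (v i : ℕ) + 1
  -- no position in `(i, r)` carries a `u`-value in `[j, v i]`, by the minimality of `k`
  have hwindow : windowCount u i r j = windowCount u i r J := by
    simp only [windowCount]
    congr 1
    refine filter_congr fun c _ => and_congr_right fun hic => and_congr_right fun hcr => ?_
    have := hmin c hic (by omega)
    constructor <;> intro <;> omega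
  have hu := rankCount_eq_add_windowCount u i hir j
  have hv := rankCount_eq_add_windowCount v i hir j
  have huJ := rankCount_eq_add_windowCount u i hir J
  have hvJ := rankCount_eq_add_windowCount v i hir J
  have hbefore := rankCount_congr (r := i) (fun a ha => hagree a ha) j
  have hbeforeJ := rankCount_congr (r := i) (fun a ha => hagree a ha) J
  have hanti := windowCount_anti v i r (show j ≤ J by omega)
  have hJ := h r J
  split_ifs at hu hv huJ hvJ <;> omega

lemma RankLE.apply_lt_of_forall_lt_eq {u v : Perm (Fin n)} (h : RankLE u v) {i : Fin n}
    (hagree : ∀ a : Fin n, a < i → u a = v a) (hne : u i ≠ v i) : u i < v i := by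
  have hempty : ∀ w : Perm (Fin n), windowCount w i (i + 1) (u i) = 0 := fun w =>
    card_eq_zero.2 (filter_eq_empty_iff.2 fun a _ ha => by omega)
  have hu := rankCount_eq_add_windowCount u i (r := i + 1) (by omega) (u i)
  have hv := rankCount_eq_add_windowCount v i (r := i + 1) (by omega) (u i)
  have hbefore := rankCount_congr (r := i) (fun a ha => hagree a ha) (u i)
  have hle := h (i + 1) (u i)
  rw [hempty] at hu hv
  have hiv : (u i : ℕ) ≤ v i := by split_ifs at hu hv <;> omega
  exact lt_of_le_of_ne (Fin.le_def.2 hiv) hne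

lemma RankLE.exists_mul_swap {u v : Perm (Fin n)} (h : RankLE u v) (hne : u ≠ v) :
    ∃ p q, p < q ∧ u p < u q ∧ RankLE (u * swap p q) v := by
  obtain ⟨i, hi, hi_min⟩ := wellFounded_lt.has_min {a | u a ≠ v a} <| by
    by_contra! hall
    exact hne (Equiv.ext fun a => not_not.1 fun ha => hall.subset ha)
  have hagree : ∀ a, a < i → u a = v a := fun a ha => not_not.1 fun hne => hi_min a hne ha
  have hiv := h.apply_lt_of_forall_lt_eq hagree hi
  have hpos : i < u⁻¹ (v i) := by
    refine lt_of_not_ge fun hle => ?_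
    rcases hle.lt_or_eq with hlt | heq
    · exact hlt.ne (v.injective (by simpa using (hagree _ hlt).symm))
    · exact hi (by simpa using congrArg u heq.symm)
  obtain ⟨k, ⟨hik, hk, hkv⟩, hk_min⟩ :=
    wellFounded_lt.has_min {c | i < c ∧ u i < u c ∧ u c ≤ v i} ⟨u⁻¹ (v i), hpos, by simpa, by simp⟩
  refine ⟨i, k, hik, hk, fun r j => ?_⟩
  rw [rankCount_mul_swap hik hk]
  split_ifs with hrect
  · exact h.rankCount_lt hagree hk hkv
      (fun c hic hck hc => lt_of_not_ge fun hcv => hk_min c ⟨hic, hc, hcv⟩ hck)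
      hrect.1 hrect.2.1 hrect.2.2.1 hrect.2.2.2
  · exact h r j

def totalRank (w : Perm (Fin n)) : ℕ :=
  ∑ x ∈ range (n + 1) ×ˢ range (n + 1), rankCount w x.1 x.2

lemma RankLE.totalRank_le {u v : Perm (Fin n)} (h : RankLE u v) : totalRank u ≤ totalRank v :=
  sum_le_sum fun x _ => h x.1 x.2

lemma totalRank_lt_mul_swap {u : Perm (Fin n)} {p q : Fin n} (hpq : p < q) (hu : u p < u q) :
    totalRank u < totalRank (u * swap p q) := by
  refine sum_lt_sum (fun x _ => by rw [rankCount_mul_swap hpq hu]; omega)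
    ⟨((p : ℕ) + 1, u q), by simp only [mem_product, mem_range]; omega, ?_⟩
  rw [rankCount_mul_swap hpq hu, if_pos (by omega)]
  omega

theorem bruhatLE_of_rankLE {u v : Perm (Fin n)} (h : RankLE u v) : BruhatLE u v := by
  by_cases huv : u = v
  · exact huv ▸ Relation.ReflTransGen.refl
  obtain ⟨p, q, hpq, hu, hle⟩ := h.exists_mul_swap huv
  have := totalRank_lt_mul_swap hpq hu
  have := hle.totalRank_le
  exact Relation.ReflTransGen.head (bruhatStep_mul_swap hpq hu) (bruhatLE_of_rankLE hle)
termination_by totalRank v - totalRank u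

/-- Multiplying `y` on the left by `s = simpleT n i h` only lowers the counts at threshold
`i + 1`, and exactly by one on the positions `r` between the occurrences of `i + 1` and `i` in
`y`; there `z`, in which `i` precedes `i + 1`, already has a count one lower than `y`. -/
lemma RankLE.simpleT_mul {i : ℕ} (h : i + 1 < n) {z y : Perm (Fin n)} (hzy : RankLE z y)
    (hy : y⁻¹ ⟨i + 1, h⟩ < y⁻¹ ⟨i, Nat.lt_of_succ_lt h⟩)
    (hz : z⁻¹ ⟨i, Nat.lt_of_succ_lt h⟩ ≤ z⁻¹ ⟨i + 1, h⟩) :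
    RankLE z (simpleT n i h * y) := by
  set P := y⁻¹ ⟨i + 1, h⟩
  set Q := y⁻¹ ⟨i, Nat.lt_of_succ_lt h⟩
  have hsy : simpleT n i h * y = y * swap P Q := by
    rw [simpleT, swap_mul_eq_mul_swap, swap_comm]
  have hyP : ((simpleT n i h * y) P : ℕ) = i := by simp [hsy, P, Q]
  have hyQ : ((simpleT n i h * y) Q : ℕ) = i + 1 := by simp [hsy, P, Q]
  have hy_eq : y = simpleT n i h * y * swap P Q := by rw [hsy, mul_assoc, swap_mul_self, mul_one]
  intro r j
  have hrank := rankCount_mul_swap hy (by rw [Fin.lt_def, hyP, hyQ]; omega) r j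
  rw [← hy_eq, hyP, hyQ] at hrank
  split_ifs at hrank with hrect
  · obtain ⟨hPr, hrQ, hij, hji⟩ := hrect
    obtain rfl : j = i + 1 := by omega
    have hz0 := rankCount_eq_rankCount_succ_add z (Nat.lt_of_succ_lt h) r
    have hz1 := rankCount_eq_rankCount_succ_add z h r
    have hy0 := rankCount_eq_rankCount_succ_add y (Nat.lt_of_succ_lt h) r
    have hy1 := rankCount_eq_rankCount_succ_add y h r
    have := hzy r i
    have := hzy r (i + 1 + 1)
    split_ifs at hz0 hz1 hy0 hy1 <;> omega
  · simpa [hrank] using hzy r j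

theorem BruhatLE.le_simpleT_mul {i : ℕ} (h : i + 1 < n) {z y : Perm (Fin n)} (hzy : BruhatLE z y)
    (hy : len (simpleT n i h * y) < len y) (hz : ¬ len (simpleT n i h * z) < len z) :
    BruhatLE z (simpleT n i h * y) :=
  bruhatLE_of_rankLE <| hzy.rankLE.simpleT_mul h ((len_simpleT_mul_lt_iff h y).1 hy)
    (not_lt.1 (mt (len_simpleT_mul_lt_iff h z).2 hz))

end

theorem stmt8_general (n : ℕ) (i : ℕ) (h : i + 1 < n) (x y : Perm (Fin n))
    (hy : len (simpleT n i h * y) < len y)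
    (hinc : ¬ BruhatLE x (simpleT n i h * y) ∧ ¬ BruhatLE (simpleT n i h * y) x) :
    ∀ z : Perm (Fin n), BruhatLT x z → BruhatLT z y →
      len (simpleT n i h * z) < len z := by
  intro z hxz hzy
  by_contra hz
  exact hinc.1 (hxz.1.trans (hzy.1.le_simpleT_mul h hy hz))

theorem stmt8 (n : ℕ) (i : ℕ) (h : i + 1 < n) (x y : Perm (Fin n))
    (hxy : BruhatLT x y)
    (hy : len (simpleT n i h * y) < len y)
    (hx : len (simpleT n i h * x) < len x)
    (hinc : ¬ BruhatLE x (simpleT n i h * y) ∧ ¬ BruhatLE (simpleT n i h * y) x) :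
    ∀ z : Perm (Fin n), BruhatLT x z → BruhatLT z y →
      len (simpleT n i h * z) < len z :=
  stmt8_general n i h x y hy hinc
end

section
/- Let b_1 ≤ b_2 ≤ ... ≤ b_n be a weakly increasing sequence of integers, e_1 < e_2 < ... < e_n a strictly increasing sequence of integers, and J = {σ_i : b_i = b_{i+1}} a set of simple reflections of S_n. Then the map sending w ∈ S_n^J to the multiset of pairs {(b_i, e_{w(i)}) : 1 ≤ i ≤ n} is injective on S_n^J. -/
open Equiv

lemma swap_lt {n i : ℕ} (h : i + 1 < n) {p q : Fin n} (hpq : p < q)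
    (hne : ¬(p = ⟨i, Nat.lt_of_succ_lt h⟩ ∧ q = ⟨i + 1, h⟩)) :
    simpleT n i h p < simpleT n i h q := by
  rw [not_and_or] at hne
  simp only [simpleT, Equiv.swap_apply_def]
  rw [Fin.lt_def] at hpq
  split_ifs <;>
    (simp only [Fin.lt_def, Fin.ext_iff, Fin.val_mk, not_or] at *; omega)

lemma len_lt {n : ℕ} (u : Perm (Fin n)) {i : ℕ} (h : i + 1 < n)
    (hu : u ⟨i, Nat.lt_of_succ_lt h⟩ < u ⟨i + 1, h⟩) :
    len u < len (u * simpleT n i h) := by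
  classical
  set a : Fin n := ⟨i, Nat.lt_of_succ_lt h⟩ with ha
  set b : Fin n := ⟨i + 1, h⟩ with hb
  set s := simpleT n i h with hs
  have hss : ∀ x, s (s x) = x := fun x => Equiv.swap_apply_self a b x
  set A := Finset.univ.filter fun p : Fin n × Fin n => p.1 < p.2 ∧ u p.2 < u p.1 with hA
  set B := Finset.univ.filter fun p : Fin n × Fin n => p.1 < p.2 ∧ (u * s) p.2 < (u * s) p.1 with hB
  have hmemB : ∀ p ∈ A, (s p.1, s p.2) ∈ B := by
    intro p hp
    simp only [hA, Finset.mem_filter] at hp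
    have hne : ¬(p.1 = a ∧ p.2 = b) := by
      rintro ⟨h1, h2⟩
      rw [h1, h2] at hp
      exact absurd hu (not_lt.2 hp.2.2.le)
    simp only [hB, Finset.mem_filter, Finset.mem_univ, true_and]
    refine ⟨swap_lt h hp.2.1 hne, ?_⟩
    simpa [Perm.mul_apply, hss] using hp.2.2
  have hinj : Set.InjOn (fun p : Fin n × Fin n => (s p.1, s p.2)) A := by
    intro p _ q _ hpq
    simp only [Prod.mk.injEq] at hpq
    exact Prod.ext (s.injective hpq.1) (s.injective hpq.2)
  have himg : A.image (fun p => (s p.1, s p.2)) ⊆ B :=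
    Finset.image_subset_iff.2 hmemB
  have hab : a < b := Fin.mk_lt_mk.2 (Nat.lt_succ_self i)
  have hsa : s a = b := Equiv.swap_apply_left a b
  have hsb : s b = a := Equiv.swap_apply_right a b
  have habB : (a, b) ∈ B := by
    simp only [hB, Finset.mem_filter, Finset.mem_univ, true_and]
    refine ⟨hab, ?_⟩
    simpa [Perm.mul_apply, hsa, hsb] using hu
  have habn : (a, b) ∉ A.image (fun p => (s p.1, s p.2)) := by
    simp only [Finset.mem_image]
    rintro ⟨p, hp, hpe⟩
    simp only [Prod.mk.injEq] at hpe
    have h1 : p.1 = b := by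
      have := congrArg s hpe.1
      rwa [hss, hsa] at this
    have h2 : p.2 = a := by
      have := congrArg s hpe.2
      rwa [hss, hsb] at this
    simp only [hA, Finset.mem_filter] at hp
    rw [h1, h2] at hp
    exact absurd hp.2.1 (not_lt.2 hab.le)
  have hcard : A.card < B.card := by
    rw [← Finset.card_image_of_injOn hinj]
    exact Finset.card_lt_card ⟨himg, fun hsub => habn (hsub habB)⟩
  simpa only [len] using hcard

lemma step_lemma {n : ℕ} {J : Set ℕ} {w : Perm (Fin n)} (hw : w ∈ DJ n J)
    {i : ℕ} (h : i + 1 < n) (hi : i ∈ J) :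
    w ⟨i, Nat.lt_of_succ_lt h⟩ < w ⟨i + 1, h⟩ := by
  by_contra hc
  push_neg at hc
  have hne : w ⟨i + 1, h⟩ ≠ w ⟨i, Nat.lt_of_succ_lt h⟩ := by
    intro he
    have := w.injective he
    simp [Fin.ext_iff] at this
  have hlt : w ⟨i + 1, h⟩ < w ⟨i, Nat.lt_of_succ_lt h⟩ := lt_of_le_of_ne hc hne
  set s := simpleT n i h with hs
  have h1 : (w * s) ⟨i, Nat.lt_of_succ_lt h⟩ = w ⟨i + 1, h⟩ := by
    simp [Perm.mul_apply, hs, simpleT, Equiv.swap_apply_left]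
  have h2 : (w * s) ⟨i + 1, h⟩ = w ⟨i, Nat.lt_of_succ_lt h⟩ := by
    simp [Perm.mul_apply, hs, simpleT, Equiv.swap_apply_right]
  have hlen := len_lt (w * s) h (by rw [h1, h2]; exact hlt)
  rw [mul_assoc] at hlen
  have hss : s * s = 1 := Equiv.swap_mul_self _ _
  rw [hss, mul_one] at hlen
  exact absurd (hw i h hi) (not_lt.2 hlen.le)

lemma single_step {n : ℕ} {J : Set ℕ} {b : Fin n → ℤ}
    (hJ : ∀ i, i ∈ J ↔ ∃ h : i + 1 < n, b ⟨i, Nat.lt_of_succ_lt h⟩ = b ⟨i + 1, h⟩)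
    {w : Perm (Fin n)} (hw : w ∈ DJ n J)
    {j k : Fin n} (hjk : (k : ℕ) = (j : ℕ) + 1) (hbeq : b j = b k) : w j < w k := by
  have h : (j : ℕ) + 1 < n := hjk ▸ k.isLt
  have e1 : (⟨(j : ℕ), Nat.lt_of_succ_lt h⟩ : Fin n) = j := rfl
  have e2 : (⟨(j : ℕ) + 1, h⟩ : Fin n) = k := Fin.ext hjk.symm
  have hiJ : (j : ℕ) ∈ J := (hJ j).2 ⟨h, by rw [e1, e2]; exact hbeq⟩
  have := step_lemma hw h hiJ
  rwa [e1, e2] at this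

lemma chain_lemma {n : ℕ} {J : Set ℕ} {b : Fin n → ℤ} (hb : Monotone b)
    (hJ : ∀ i, i ∈ J ↔ ∃ h : i + 1 < n, b ⟨i, Nat.lt_of_succ_lt h⟩ = b ⟨i + 1, h⟩)
    {w : Perm (Fin n)} (hw : w ∈ DJ n J)
    {j k : Fin n} (hjk : j < k) (hbeq : b j = b k) : w j < w k := by
  obtain ⟨d, hd⟩ : ∃ d, (k : ℕ) = (j : ℕ) + 1 + d := ⟨(k : ℕ) - ((j : ℕ) + 1), by
    have := Fin.lt_def.1 hjk; omega⟩
  induction d generalizing k with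
  | zero => exact single_step hJ hw (by omega) hbeq
  | succ d ih =>
    have hmn : (j : ℕ) + 1 + d < n := by have := k.isLt; omega
    set m : Fin n := ⟨(j : ℕ) + 1 + d, hmn⟩ with hm
    have hjm : j < m := Fin.lt_def.2 (by simp [hm]; omega)
    have hmk : m < k := Fin.lt_def.2 (by simp [hm]; omega)
    have hbjm : b j = b m := le_antisymm (hb hjm.le) (hbeq ▸ hb hmk.le)
    have h1 : w j < w m := ih hjm hbjm rfl
    have h2 : w m < w k := single_step hJ hw (by simp [hm]; omega) (by rw [← hbjm]; exact hbeq)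
    exact lt_trans h1 h2

lemma rank_eq {α β : Type*} [LinearOrder α] [LinearOrder β] [DecidableEq β]
    (s : Finset α) (f : α → β) (hf : ∀ j ∈ s, ∀ k ∈ s, j < k → f j < f k)
    (i : α) (hi : i ∈ s) :
    ((s.image f).filter (· ≤ f i)).card = (s.filter (· ≤ i)).card := by
  classical
  have hset : (s.image f).filter (· ≤ f i) = (s.filter (· ≤ i)).image f := by
    ext x
    simp only [Finset.mem_filter, Finset.mem_image]
    constructor
    · rintro ⟨⟨j, hj, rfl⟩, hle⟩
      refine ⟨j, ⟨hj, ?_⟩, rfl⟩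
      by_contra hni
      exact absurd hle (not_le.2 (hf i hi j hj (not_le.1 hni)))
    · rintro ⟨j, ⟨hj, hji⟩, rfl⟩
      refine ⟨⟨j, hj, rfl⟩, ?_⟩
      rcases eq_or_lt_of_le hji with rfl | hlt
      · exact le_rfl
      · exact (hf j hj i hi hlt).le
  rw [hset, Finset.card_image_of_injOn]
  intro x hx y hy hxy
  simp only [Finset.coe_filter, Set.mem_setOf_eq] at hx hy
  rcases lt_trichotomy x y with hlt | heq | hlt
  · exact absurd hxy (ne_of_lt (hf x hx.1 y hy.1 hlt))
  · exact heq
  · exact absurd hxy.symm (ne_of_lt (hf y hy.1 x hx.1 hlt))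

lemma eq_of_rank {β : Type*} [LinearOrder β] (t : Finset β) {x y : β}
    (hx : x ∈ t) (hy : y ∈ t)
    (hc : (t.filter (· ≤ x)).card = (t.filter (· ≤ y)).card) : x = y := by
  classical
  rcases lt_trichotomy x y with hlt | heq | hlt
  · exfalso
    have hsub : t.filter (· ≤ x) ⊆ t.filter (· ≤ y) := by
      intro z hz
      simp only [Finset.mem_filter] at hz ⊢
      exact ⟨hz.1, hz.2.trans hlt.le⟩
    have := Finset.eq_of_subset_of_card_le hsub hc.ge
    have hyx : y ∈ t.filter (· ≤ x) := this ▸ (Finset.mem_filter.2 ⟨hy, le_rfl⟩)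
    exact absurd (Finset.mem_filter.1 hyx).2 (not_le.2 hlt)
  · exact heq
  · exfalso
    have hsub : t.filter (· ≤ y) ⊆ t.filter (· ≤ x) := by
      intro z hz
      simp only [Finset.mem_filter] at hz ⊢
      exact ⟨hz.1, hz.2.trans hlt.le⟩
    have := Finset.eq_of_subset_of_card_le hsub hc.le
    have hyx : x ∈ t.filter (· ≤ y) := this ▸ (Finset.mem_filter.2 ⟨hx, le_rfl⟩)
    exact absurd (Finset.mem_filter.1 hyx).2 (not_le.2 hlt)

lemma mono_eq {α β : Type*} [LinearOrder α] [LinearOrder β] [DecidableEq β]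
    (s : Finset α) (f g : α → β)
    (hf : ∀ j ∈ s, ∀ k ∈ s, j < k → f j < f k)
    (hg : ∀ j ∈ s, ∀ k ∈ s, j < k → g j < g k)
    (himg : s.image f = s.image g) (i : α) (hi : i ∈ s) : f i = g i := by
  classical
  apply eq_of_rank (s.image f) (Finset.mem_image_of_mem f hi)
    (himg ▸ Finset.mem_image_of_mem g hi)
  rw [rank_eq s f hf i hi, himg, rank_eq s g hg i hi]

theorem stmt14 (n : ℕ) (b e : Fin n → ℤ) (hb : Monotone b) (he : StrictMono e)
    (J : Set ℕ)
    (hJ : ∀ i, i ∈ J ↔ ∃ h : i + 1 < n, b ⟨i, Nat.lt_of_succ_lt h⟩ = b ⟨i + 1, h⟩)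
    (w w' : Perm (Fin n)) (hw : w ∈ DJ n J) (hw' : w' ∈ DJ n J)
    (heq : (Finset.univ.val.map fun i => (b i, e (w i))) =
           (Finset.univ.val.map fun i => (b i, e (w' i)))) :
    w = w' := by
  classical
  apply Equiv.ext
  intro i
  set T : Finset (Fin n) := Finset.univ.filter fun j => b j = b i with hT
  have h3 : ∀ u : Perm (Fin n),
      Multiset.filter (fun x => ((fun p : ℤ × ℤ => p.1 = b i) ∘ fun j => (b j, e (u j))) x)
        Finset.univ.val = T.val := by
    intro u
    rw [hT, Finset.filter_val]
    exact Multiset.filter_congr (fun x _ => Iff.rfl)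
  have h2 := congrArg (Multiset.filter (fun p : ℤ × ℤ => p.1 = b i)) heq
  rw [Multiset.filter_map, Multiset.filter_map, h3 w, h3 w'] at h2
  have key : Multiset.map (fun j => e (w j)) T.val = Multiset.map (fun j => e (w' j)) T.val := by
    calc Multiset.map (fun j => e (w j)) T.val
        = Multiset.map Prod.snd (Multiset.map (fun j => (b j, e (w j))) T.val) := by
          rw [Multiset.map_map]; rfl
      _ = Multiset.map Prod.snd (Multiset.map (fun j => (b j, e (w' j))) T.val) := by rw [h2]
      _ = Multiset.map (fun j => e (w' j)) T.val := by rw [Multiset.map_map]; rfl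
  have hmap : Multiset.map w T.val = Multiset.map w' T.val := by
    apply Multiset.map_injective he.injective
    rw [Multiset.map_map, Multiset.map_map]
    exact key
  have himg : T.image w = T.image w' := by
    rw [← Finset.val_inj, Finset.image_val, Finset.image_val, hmap]
  have hmono : ∀ u : Perm (Fin n), u ∈ DJ n J → ∀ j ∈ T, ∀ k ∈ T, j < k → u j < u k := by
    intro u hu j hj k hk hjk
    simp only [hT, Finset.mem_filter] at hj hk
    exact chain_lemma hb hJ hu hjk (hj.2.trans hk.2.symm)
  exact mono_eq T w w' (hmono w hw) (hmono w' hw') himg i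
    (by simp [hT])
end
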